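/- Let f₁, …, f_m : ℝⁿ → ℝ be differentiable with each ∇f_i Lipschitz continuous with constant L_i on ℝⁿ, and set L = max_{i∈[m]} L_i. Let x ∈ ℝⁿ, d ∈ ℝⁿ with d ≠ 0, t > 0, σ₂ ∈ (0,1), and a > 0. Assume 𝒟(x, d) ≤ −a ‖d‖² and the curvature condition 𝒟(x + t d, d) ≥ σ₂ 𝒟(x, d). Then t ≥ (1 − σ₂) a / L. -/
import Mathlib


open RealInnerProductSpace

noncomputable def Dmax {n m : ℕ} (hm : 0 < m) (f : Fin m → EuclideanSpace ℝ (Fin n) → ℝ)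
    (y d : EuclideanSpace ℝ (Fin n)) : ℝ :=
  Finset.univ.sup' ⟨⟨0, hm⟩, Finset.mem_univ _⟩ fun i => ⟪gradient (f i) y, d⟫

/-- under Lipschitz gradients with `L = max_i L_i`, if
`𝒟(x,d) ≤ −a‖d‖²` and the curvature condition `𝒟(x+td,d) ≥ σ₂𝒟(x,d)` holds,
then `t ≥ (1−σ₂)a/L`. -/
theorem stmt_10 (n m : ℕ) (hm : 0 < m) (f : Fin m → EuclideanSpace ℝ (Fin n) → ℝ)
    (hf : ∀ i, Differentiable ℝ (f i))
    (Lc : Fin m → ℝ) (hLc : ∀ i, 0 < Lc i)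
    (hLip : ∀ i : Fin m, ∀ y z : EuclideanSpace ℝ (Fin n),
      ‖gradient (f i) y - gradient (f i) z‖ ≤ Lc i * ‖y - z‖)
    (L : ℝ) (hL : L = Finset.univ.sup' ⟨⟨0, hm⟩, Finset.mem_univ _⟩ Lc)
    (x d : EuclideanSpace ℝ (Fin n)) (hd : d ≠ 0) (t : ℝ) (ht : 0 < t)
    (σ₂ : ℝ) (hσ₂ : σ₂ ∈ Set.Ioo (0 : ℝ) 1) (a : ℝ) (ha : 0 < a)
    (hD : Dmax hm f x d ≤ -a * ‖d‖ ^ 2)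
    (hcurv : σ₂ * Dmax hm f x d ≤ Dmax hm f (x + t • d) d) :
    (1 - σ₂) * a / L ≤ t := by
  obtain ⟨hσ0, hσ1⟩ := hσ₂
  have hdn : (0:ℝ) < ‖d‖ := norm_pos_iff.mpr hd
  have hL0 : 0 < L := by
    rw [hL]
    obtain ⟨i, _, hi⟩ := Finset.exists_mem_eq_sup' ⟨⟨0, hm⟩, Finset.mem_univ _⟩ Lc
    rw [hi]; exact hLc i
  -- key bound: Dmax at x+td ≤ Dmax at x + L t ‖d‖²
  have key : Dmax hm f (x + t • d) d ≤ Dmax hm f x d + L * t * ‖d‖ ^ 2 := by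
    unfold Dmax
    obtain ⟨i, _, hi⟩ := Finset.exists_mem_eq_sup'
      (⟨⟨0, hm⟩, Finset.mem_univ (⟨0, hm⟩ : Fin m)⟩ : Finset.univ.Nonempty)
      (fun i => ⟪gradient (f i) (x + t • d), d⟫)
    rw [hi]
    have h1 : ⟪gradient (f i) (x + t • d), d⟫ ≤ ⟪gradient (f i) x, d⟫ + L * t * ‖d‖ ^ 2 := by
      have := real_inner_le_norm (gradient (f i) (x + t • d) - gradient (f i) x) d
      have hlip := hLip i (x + t • d) x
      have hLi : Lc i ≤ L := by
        rw [hL]; exact Finset.le_sup' Lc (Finset.mem_univ i)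
      have hnorm : ‖x + t • d - x‖ = t * ‖d‖ := by
        simp [norm_smul, abs_of_pos ht]
      rw [hnorm] at hlip
      have hbound : ⟪gradient (f i) (x + t • d) - gradient (f i) x, d⟫ ≤ L * t * ‖d‖ ^ 2 := by
        calc ⟪gradient (f i) (x + t • d) - gradient (f i) x, d⟫
            ≤ ‖gradient (f i) (x + t • d) - gradient (f i) x‖ * ‖d‖ := this
          _ ≤ (Lc i * (t * ‖d‖)) * ‖d‖ := by
              exact mul_le_mul_of_nonneg_right hlip (norm_nonneg d)
          _ ≤ (L * (t * ‖d‖)) * ‖d‖ := by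
              have h0 : 0 ≤ t * ‖d‖ := by positivity
              exact mul_le_mul_of_nonneg_right
                (mul_le_mul_of_nonneg_right hLi h0) (norm_nonneg d)
          _ = L * t * ‖d‖ ^ 2 := by ring
      rw [inner_sub_left] at hbound
      linarith
    refine h1.trans ?_
    have : ⟪gradient (f i) x, d⟫ ≤ Finset.univ.sup' ⟨⟨0, hm⟩, Finset.mem_univ _⟩
        (fun j => ⟪gradient (f j) x, d⟫) :=
      Finset.le_sup' (fun j => ⟪gradient (f j) x, d⟫) (Finset.mem_univ i)
    linarith
  have hDneg : Dmax hm f x d ≤ -a * ‖d‖ ^ 2 := hD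
  have h2 : (1 - σ₂) * (a * ‖d‖ ^ 2) ≤ L * t * ‖d‖ ^ 2 := by
    nlinarith [hcurv, key, hDneg]
  have h3 : (1 - σ₂) * a ≤ L * t := by
    have hd2 : (0:ℝ) < ‖d‖ ^ 2 := by positivity
    nlinarith
  rw [div_le_iff₀ hL0] at *
  linarith
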